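/- arXiv:2006.11657 — 2 statements merged into one kernel-verified Lean document; each statement's English description precedes it below -/
import Mathlib

section
/- Let z be a message with seq z ≥ n (n ≥ 1), let T be the length-n prefix of the path of z, and let P be a partial sequence such that every p ∈ P with seq p ≤ n is in the path of z. Then P is consistent with T. -/
/-- Iterate the parent map `n` times (in `Option`). -/
def parentIter {M : Type*} (parent : M → Option M) : ℕ → M → Option M
  | 0, m => some m
  | n + 1, m => (parent m).bind (parentIter parent n)

/-- `p` is in the path of `u`. -/
def InPath {M : Type*} (seq : M → ℕ) (parent : M → Option M) (p u : M) : Prop :=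
  seq p ≤ seq u ∧ parentIter parent (seq u - seq p) u = some p

/-- `L = (t_1, …, t_n)` is a total sequence (of length `L.length`). -/
def IsTotalSeq {M : Type*} (seq : M → ℕ) (parent : M → Option M) (L : List M) : Prop :=
  (∀ (i : ℕ) (h : i < L.length), seq L[i] = i + 1) ∧
  (∀ (i : ℕ) (h : i + 1 < L.length), parent L[i + 1] = some (L[i]'(by omega)))

/-- A finite set of messages is a partial sequence if no two have the same seq number. -/
def IsPartialSeq {M : Type*} (seq : M → ℕ) (P : Finset M) : Prop :=
  ∀ p ∈ P, ∀ q ∈ P, seq p = seq q → p = q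

/-- A partial sequence `P` is consistent with a total sequence `T`. -/
def ConsistentWith {M : Type*} (seq : M → ℕ) (P : Finset M) (T : List M) : Prop :=
  ∀ p ∈ P, seq p ≤ T.length → T[seq p - 1]? = some p

/-! Along a total sequence, iterating the parent map `k` times from entry `i + k` gives entry `i`.
The last entry `z` has `seq z = L.length`, so for `p` in the path of `z` both `p` and the entry
`L[seq p - 1]` are the result of iterating the parent map `seq z - seq p` times from `z`. -/

namespace IsTotalSeq

variable {M : Type*} {seq : M → ℕ} {parent : M → Option M} {L : List M}

theorem parentIter_getElem (hL : IsTotalSeq seq parent L) :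
    ∀ (k i : ℕ) (h : i + k < L.length),
      parentIter parent k L[i + k] = some (L[i]'(by omega))
  | 0, _, _ => rfl
  | k + 1, i, h => by
    simp only [parentIter, ← Nat.add_assoc, hL.2 (i + k) h, Option.bind_some]
    exact parentIter_getElem hL k i (by omega)

theorem parentIter_getLast? (hL : IsTotalSeq seq parent L) {z : M}
    (hLz : L.getLast? = some z) {i : ℕ} (hi : i < L.length) :
    parentIter parent (L.length - 1 - i) z = some L[i] := by
  obtain ⟨hne, rfl⟩ : ∃ h : 0 < L.length, L[L.length - 1] = z := by
    simpa [List.getLast?_eq_getElem?, List.getElem?_eq_some_iff] using hLz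
  have hidx : i + (L.length - 1 - i) = L.length - 1 := by omega
  simpa only [hidx] using hL.parentIter_getElem (L.length - 1 - i) i (by omega)

theorem seq_of_getLast? (hL : IsTotalSeq seq parent L) {z : M} (hLz : L.getLast? = some z) :
    seq z = L.length := by
  obtain ⟨hne, rfl⟩ : ∃ h : 0 < L.length, L[L.length - 1] = z := by
    simpa [List.getLast?_eq_getElem?, List.getElem?_eq_some_iff] using hLz
  rw [hL.1]
  omega

theorem getElem?_of_inPath (hL : IsTotalSeq seq parent L) {z p : M}
    (hLz : L.getLast? = some z) (hp : 1 ≤ seq p) (hpz : InPath seq parent p z) :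
    L[seq p - 1]? = some p := by
  obtain ⟨hle, hiter⟩ := hpz
  have hz := hL.seq_of_getLast? hLz
  have hdescend := hL.parentIter_getLast? hLz (i := seq p - 1) (by omega)
  rw [show L.length - 1 - (seq p - 1) = seq z - seq p by omega, hiter, Option.some_inj]
    at hdescend
  exact List.getElem?_eq_some_iff.mpr ⟨_, hdescend.symm⟩

end IsTotalSeq

theorem consistent_of_inPath_general {M : Type*} (seq : M → ℕ) (parent : M → Option M)
    (hseq : ∀ m, 1 ≤ seq m)
    (n : ℕ) (z : M)
    (L : List M) (hL : IsTotalSeq seq parent L) (hLz : L.getLast? = some z)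
    (T : List M) (hT : T = L.take n)
    (P : Finset M)
    (hPz : ∀ p ∈ P, seq p ≤ n → InPath seq parent p z) :
    ConsistentWith seq P T := by
  subst hT
  intro p hpP hple
  have hp := hseq p
  rw [List.length_take] at hple
  rw [List.getElem?_take, if_pos (by omega)]
  exact hL.getElem?_of_inPath hLz hp (hPz p hpP (by omega))

/-- Let `z` be a message with `seq z ≥ n` (`n ≥ 1`), let `T` be the
length-`n` prefix of the path of `z`, and let `P` be a partial sequence such
that every `p ∈ P` with `seq p ≤ n` is in the path of `z`. Then `P` is
consistent with `T`. -/
theorem consistent_of_inPath {M : Type*} (seq : M → ℕ) (parent : M → Option M)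
    (hseq : ∀ m, 1 ≤ seq m)
    (hpar : ∀ t p, parent t = some p → seq t = seq p + 1)
    (hnone : ∀ t, parent t = none ↔ seq t = 1)
    (n : ℕ) (hn : 1 ≤ n) (z : M) (hz : n ≤ seq z)
    (L : List M) (hL : IsTotalSeq seq parent L) (hLz : L.getLast? = some z)
    (T : List M) (hT : T = L.take n)
    (P : Finset M) (hP : IsPartialSeq seq P)
    (hPz : ∀ p ∈ P, seq p ≤ n → InPath seq parent p z) :
    ConsistentWith seq P T :=
  consistent_of_inPath_general seq parent hseq n z L hL hLz T hT P hPz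
end

section
/- If two messages t and u have a common ancestor (some message in the path of both), then there is a last common ancestor: a message q in the path of both t and u such that every common ancestor of t and u is in the path of q. Moreover, if neither t is in the path of u nor u is in the path of t, then seq q + 1 ≤ seq t, seq q + 1 ≤ seq u, and the (unique) message at sequence number seq q + 1 in the path of t is distinct from the (unique) message at sequence number seq q + 1 in the path of u. -/
section Path

variable {M : Type*} {seq : M → ℕ} {parent : M → Option M}

lemma parentIter_add (a b : ℕ) (u : M) :
    parentIter parent (a + b) u = (parentIter parent a u).bind (parentIter parent b) := by
  induction a generalizing u with
  | zero => simp [parentIter]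
  | succ a ih =>
    rw [Nat.add_right_comm]
    simp only [parentIter, Option.bind_assoc, ih]

lemma InPath.eq_of_seq_le {p u : M} (hp : InPath seq parent p u) (hle : seq u ≤ seq p) :
    p = u := by
  obtain ⟨-, hiter⟩ := hp
  rw [Nat.sub_eq_zero_of_le hle] at hiter
  exact (Option.some_injective _ hiter).symm

lemma InPath.of_seq_le {c q t : M} (hc : InPath seq parent c t) (hq : InPath seq parent q t)
    (hle : seq c ≤ seq q) : InPath seq parent c q := by
  obtain ⟨-, hiter⟩ := hc
  have hsplit : seq t - seq c = (seq t - seq q) + (seq q - seq c) := by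
    have := hq.1
    omega
  rw [hsplit, parentIter_add, hq.2, Option.bind_some] at hiter
  exact ⟨hle, hiter⟩

lemma exists_commonAncestor_forall_seq_le {t u : M}
    (hca : ∃ c, InPath seq parent c t ∧ InPath seq parent c u) :
    ∃ q, (InPath seq parent q t ∧ InPath seq parent q u) ∧
      ∀ c, InPath seq parent c t → InPath seq parent c u → seq c ≤ seq q := by
  let S := seq '' {c | InPath seq parent c t ∧ InPath seq parent c u}
  have hbdd : BddAbove S := ⟨seq t, by rintro _ ⟨c, ⟨hct, -⟩, rfl⟩; exact hct.1⟩
  obtain ⟨_, ⟨q, hq, rfl⟩, hmax⟩ :=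
    hbdd.exists_isGreatest_of_nonempty (Set.Nonempty.image seq hca)
  exact ⟨q, hq, fun c hct hcu => hmax ⟨c, ⟨hct, hcu⟩, rfl⟩⟩

end Path

theorem last_common_ancestor_general {M : Type*} (seq : M → ℕ) (parent : M → Option M)
    (t u : M) (hca : ∃ c, InPath seq parent c t ∧ InPath seq parent c u) :
    ∃ q, InPath seq parent q t ∧ InPath seq parent q u ∧
      (∀ c, InPath seq parent c t → InPath seq parent c u → InPath seq parent c q) ∧
      ((¬ InPath seq parent t u ∧ ¬ InPath seq parent u t) →
        seq q + 1 ≤ seq t ∧ seq q + 1 ≤ seq u ∧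
        ∀ r l, InPath seq parent r t → seq r = seq q + 1 →
          InPath seq parent l u → seq l = seq q + 1 → r ≠ l) := by
  obtain ⟨q, ⟨hqt, hqu⟩, hmax⟩ := exists_commonAncestor_forall_seq_le hca
  refine ⟨q, hqt, hqu, fun c hct hcu => hct.of_seq_le hqt (hmax c hct hcu), ?_⟩
  rintro ⟨htu, hut⟩
  refine ⟨?_, ?_, ?_⟩
  · by_contra hlt
    exact htu (hqt.eq_of_seq_le (by omega) ▸ hqu)
  · by_contra hlt
    exact hut (hqu.eq_of_seq_le (by omega) ▸ hqt)
  · rintro r l hrt hr hlu hl rfl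
    have := hmax r hrt hlu
    omega

/-- If `t` and `u` have a common ancestor, then they have a last
common ancestor `q`; moreover, if neither is in the path of the other, then
`seq q + 1 ≤ seq t`, `seq q + 1 ≤ seq u`, and the unique messages at sequence
number `seq q + 1` in the respective paths of `t` and `u` are distinct. -/
theorem last_common_ancestor {M : Type*} (seq : M → ℕ) (parent : M → Option M)
    (hseq : ∀ m, 1 ≤ seq m)
    (hpar : ∀ x p, parent x = some p → seq x = seq p + 1)
    (hnone : ∀ x, parent x = none ↔ seq x = 1)
    (t u : M) (hca : ∃ c, InPath seq parent c t ∧ InPath seq parent c u) :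
    ∃ q, InPath seq parent q t ∧ InPath seq parent q u ∧
      (∀ c, InPath seq parent c t → InPath seq parent c u → InPath seq parent c q) ∧
      ((¬ InPath seq parent t u ∧ ¬ InPath seq parent u t) →
        seq q + 1 ≤ seq t ∧ seq q + 1 ≤ seq u ∧
        ∀ r l, InPath seq parent r t → seq r = seq q + 1 →
          InPath seq parent l u → seq l = seq q + 1 → r ≠ l) :=
  last_common_ancestor_general seq parent t u hca
end
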